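/- arXiv:2302.01866 — 3 statements merged into one kernel-verified Lean document; each statement's English description precedes it below -/
import Mathlib

section
/- In the ring $R_n = \mathbb{Z}[d]/\langle \Delta_{n-1}(d)\rangle$ with $n \geq 3$, letting $\pi_k$ denote the image of $\Delta_k(d)$, one has $\pi_{n-2} \cdot \pi_b = \pi_{n-2-b}$ for all $0 \leq b \leq n-2$. -/
open Polynomial

/-- Normalized Chebyshev polynomials of the second kind. -/
noncomputable def Delta : ℕ → Polynomial ℤ
  | 0 => 1
  | 1 => Polynomial.X
  | (k+2) => Polynomial.X * Delta (k+1) - Delta k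

namespace Polynomial.Chebyshev

variable (R : Type*) [CommRing R]

/-- Both sides satisfy the Chebyshev recurrence in `k` and agree at `k = 0, 1`. -/
theorem S_mul_S (m k : ℤ) : S R m * S R k = S R (m - k) + S R (k - 1) * S R (m + 1) := by
  induction k using Polynomial.Chebyshev.induct with
  | zero => simp
  | one => simp [S_add_one R m, mul_comm]
  | add_two k ih1 ih2 =>
    have h₁ := S_add_two R k
    have h₂ := S_sub_two R (m - k)
    have h₃ := S_add_two R (k - 1)
    linear_combination (norm := ring_nf) S R m * h₁ - h₂ - S R (m + 1) * h₃ - ih2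
      + (X : R[X]) * ih1
  | neg_add_one k ih1 ih2 =>
    have h₁ := S_add_two R (-k - 1)
    have h₂ := S_sub_two R (m - (-k - 1))
    have h₃ := S_add_two R (-k - 2)
    linear_combination (norm := ring_nf) S R m * h₁ - h₂ - S R (m + 1) * h₃ - ih2
      + (X : R[X]) * ih1

end Polynomial.Chebyshev

theorem Delta_eq_S : ∀ k : ℕ, Delta k = Chebyshev.S ℤ k
  | 0 => by simp [Delta]
  | 1 => by simp [Delta]
  | k + 2 => by
    rw [Delta, Delta_eq_S (k + 1), Delta_eq_S k]
    push_cast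
    exact (Chebyshev.S_add_two ℤ k).symm

theorem fusion_rule_pi_top (n : ℕ) (hn : 3 ≤ n) (b : ℕ) (hb : b ≤ n - 2) :
    (Ideal.Quotient.mk (Ideal.span {Delta (n-1)}) (Delta (n-2))) *
      (Ideal.Quotient.mk (Ideal.span {Delta (n-1)}) (Delta b)) =
    (Ideal.Quotient.mk (Ideal.span {Delta (n-1)}) (Delta (n-2-b))) := by
  obtain ⟨m, rfl⟩ : ∃ m, n = m + 2 := ⟨n - 2, by omega⟩
  rw [← map_mul, Ideal.Quotient.eq, Ideal.mem_span_singleton]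
  refine ⟨Chebyshev.S ℤ (b - 1), ?_⟩
  simp only [Delta_eq_S, Nat.add_sub_cancel, show m + 2 - 1 = m + 1 by omega]
  rw [Nat.cast_sub (by omega), Chebyshev.S_mul_S]
  push_cast
  ring
end

section
/- Let $m = 2k+1$ with $k \geq 2$, and set $\ell = k$ if $k$ is even and $\ell = k - 1$ if $k$ is odd. Then in the fusion ring $K_0(\mathrm{TLJ}_m)$, the class $\pi_\ell$ appears as a summand of $\pi_\ell \cdot \pi_{m-3}$; i.e., writing $\pi_\ell \cdot \pi_{m-3} = \sum_j c_j \pi_j$ in the basis $\{\pi_0,\ldots,\pi_{m-2}\}$, the coefficient $c_\ell \geq 1$. -/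
/-!
In `ℤ[X] ⧸ (Δ_{N+1})` write `π b` for the class of `Δ_b`. The recurrence `X Δ_{n+1} = Δ_n + Δ_{n+2}`
together with `Δ_{N+1} = 0` shows that `π_N` acts by the reflection `π_b ↦ π_{N-b}`. Since
`π_{N-1} = π_1 π_N`, this gives `π_ℓ π_{N-1} = π_{N+1-ℓ} + π_{N-1-ℓ}`. With `m = 2k+1`, i.e. `N = 2k-1`,
one of the two summands is `π_ℓ`: the first when `ℓ = k`, the second when `ℓ = k-1`.
-/

open Polynomial Finset

lemma X_mul_Delta (n : ℕ) : X * Delta (n + 1) = Delta n + Delta (n + 2) := by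
  rw [Delta]; ring

section Quotient

variable (N : ℕ)

local notation "π" b:max => Ideal.Quotient.mk (Ideal.span {Delta (N + 1)}) (Delta b)

lemma mk_Delta_mul_mk_Delta_one (n : ℕ) : π (n + 1) * π 1 = π n + π (n + 2) := by
  rw [← map_mul, ← map_add, ← X_mul_Delta, mul_comm, Delta]

lemma mk_Delta_succ_eq_zero : π (N + 1) = 0 :=
  Ideal.Quotient.eq_zero_iff_mem.mpr (Ideal.subset_span rfl)

lemma mk_Delta_top_mul_of_add_eq {b s : ℕ} (h : s + b = N) : π N * π b = π s := by
  induction b using Nat.twoStepInduction generalizing s with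
  | zero =>
    subst h
    simp [Delta]
  | one =>
    subst h
    rw [mk_Delta_mul_mk_Delta_one, mk_Delta_succ_eq_zero, add_zero]
  | more b ih ih_succ =>
    have hrec := eq_sub_of_add_eq' (mk_Delta_mul_mk_Delta_one N b).symm
    rw [hrec, mul_sub, ← mul_assoc, ih_succ (s := s + 1) (by omega), ih (s := s + 2) (by omega),
      mk_Delta_mul_mk_Delta_one, add_sub_cancel_right]

lemma mk_Delta_mul_mk_Delta_pred {t : ℕ} (h : t + 2 ≤ N) :
    π (t + 1) * π (N - 1) = π (N - t) + π (N - (t + 2)) := by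
  calc π (t + 1) * π (N - 1) = π N * (π (t + 1) * π 1) := by
        rw [← mk_Delta_top_mul_of_add_eq N (by omega : N - 1 + 1 = N)]; ring
    _ = π N * π t + π N * π (t + 2) := by rw [mk_Delta_mul_mk_Delta_one, mul_add]
    _ = π (N - t) + π (N - (t + 2)) := by
        rw [mk_Delta_top_mul_of_add_eq N (by omega : N - t + t = N),
          mk_Delta_top_mul_of_add_eq N (by omega : N - (t + 2) + (t + 2) = N)]

lemma exists_mk_Delta_mul_mk_Delta_pred_eq_add {ℓ : ℕ} (hℓ : 2 ≤ ℓ)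
    (hN : N + 1 = 2 * ℓ ∨ N = 2 * ℓ + 1) : ∃ j < N + 1, π ℓ * π (N - 1) = π ℓ + π j := by
  obtain ⟨t, rfl⟩ : ∃ t, ℓ = t + 1 := ⟨ℓ - 1, by omega⟩
  rw [mk_Delta_mul_mk_Delta_pred N (by omega)]
  rcases hN with hN | hN
  · exact ⟨N - (t + 2), by omega, by rw [show N - t = t + 1 by omega]⟩
  · exact ⟨N - t, by omega, by rw [show N - (t + 2) = t + 1 by omega]; exact add_comm _ _⟩

end Quotient

theorem pi_ell_summand_of_product_odd_case (k : ℕ) (hk : 2 ≤ k) :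
    ∃ c : ℕ → ℕ,
      (Ideal.Quotient.mk (Ideal.span {Delta (2*k+1-1)})
          (Delta (if Even k then k else k - 1))) *
        (Ideal.Quotient.mk (Ideal.span {Delta (2*k+1-1)}) (Delta (2*k+1-3))) =
      Ideal.Quotient.mk (Ideal.span {Delta (2*k+1-1)})
          (Delta (if Even k then k else k - 1)) +
        ∑ j ∈ Finset.range (2*k+1-1),
          c j • Ideal.Quotient.mk (Ideal.span {Delta (2*k+1-1)}) (Delta j) := by
  set ℓ := if Even k then k else k - 1 with hℓ_def
  have hℓ : 2 ≤ ℓ ∧ (2 * k - 1 + 1 = 2 * ℓ ∨ 2 * k - 1 = 2 * ℓ + 1) := by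
    rw [hℓ_def]
    split_ifs with hk_even
    · omega
    · obtain ⟨i, rfl⟩ := Nat.not_even_iff_odd.mp hk_even
      omega
  obtain ⟨j, hj, hprod⟩ := exists_mk_Delta_mul_mk_Delta_pred_eq_add (2 * k - 1) hℓ.1 hℓ.2
  refine ⟨fun i => if i = j then 1 else 0, ?_⟩
  rw [show 2 * k + 1 - 1 = 2 * k - 1 + 1 by omega, show 2 * k + 1 - 3 = 2 * k - 1 - 1 by omega,
    hprod]
  simp only [ite_smul, one_smul, zero_smul, Finset.sum_ite_eq', Finset.mem_range, if_pos hj]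
end

section
/- For the $I_2(n)$ Coxeter graph (two vertices joined by an edge labelled $n \geq 3$), let $L = R^2$ be the free module over $R = K_0(\mathcal{C}_n)$ with bilinear form $B(e_1,e_1) = B(e_2,e_2) = 2$ and $B(e_1,e_2) = -\pi_{n-3}$, where $\pi_{n-3}$ is the class of $\Pi_{n-3}$ in $K_0(\mathrm{TLJ}_n)$. Then the group generated by $\sigma_1, \sigma_2$, where $\sigma_i(v) = v - B(e_i,v)e_i$, is a dihedral group in which $\sigma_1\sigma_2$ has order $n$. -/
set_option maxHeartbeats 1000000
set_option synthInstance.maxHeartbeats 200000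

open Polynomial

/-- The fusion ring `K₀(TLJₙ) = ℤ[d]/⟨Δₙ₋₁⟩`. -/
noncomputable abbrev Rn (n : ℕ) : Type := Polynomial ℤ ⧸ Ideal.span {Delta (n-1)}

/-- The class of `Πₖ` in the fusion ring. -/
noncomputable def piK (n k : ℕ) : Rn n :=
  Ideal.Quotient.mk (Ideal.span {Delta (n-1)}) (Delta k)

namespace DihedralAux

lemma Delta_zero : Delta 0 = 1 := rfl
lemma Delta_one : Delta 1 = X := rfl
lemma Delta_add_two (k : ℕ) : Delta (k+2) = X * Delta (k+1) - Delta k := rfl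

lemma Delta_monic : ∀ k, (Delta k).Monic ∧ (Delta k).natDegree = k
  | 0 => ⟨monic_one, natDegree_one⟩
  | 1 => ⟨monic_X, natDegree_X⟩
  | (k+2) => by
      obtain ⟨h1, h1d⟩ := Delta_monic (k+1)
      obtain ⟨h0, h0d⟩ := Delta_monic k
      have hm : (X * Delta (k+1)).Monic := monic_X.mul h1
      have hd : (X * Delta (k+1)).natDegree = k + 2 := by
        rw [natDegree_mul X_ne_zero h1.ne_zero, natDegree_X, h1d]; omega
      have hlt : (Delta k).natDegree < (X * Delta (k+1)).natDegree := by
        rw [hd, h0d]; omega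
      constructor
      · rw [Delta_add_two]
        exact hm.sub_of_left (degree_lt_degree hlt)
      · rw [Delta_add_two, natDegree_sub_eq_left_of_natDegree_lt hlt, hd]

noncomputable def D2 (k : ℕ) : Polynomial ℤ := (Delta k).comp (X^2 - 2)

lemma D2_zero : D2 0 = 1 := by simp [D2, Delta_zero]
lemma D2_one : D2 1 = X^2 - 2 := by simp [D2, Delta_one]
lemma D2_add_two (k : ℕ) : D2 (k+2) = (X^2 - 2) * D2 (k+1) - D2 k := by
  simp [D2, Delta_add_two, sub_comp, mul_comp, X_comp]

lemma I1 : ∀ k, X * D2 k = Delta (2*k+1)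
  | 0 => by norm_num [D2_zero, Delta_one]
  | 1 => by
      have e : 2*1+1 = 1+2 := by norm_num
      rw [e, D2_one, Delta_add_two, Delta_add_two, Delta_one, Delta_zero]; ring
  | (k+2) => by
      have h1 := I1 (k+1)
      have h0 := I1 k
      have e5 : 2*(k+2)+1 = (2*k+3)+2 := by ring
      have e4 : 2*k+4 = (2*k+2)+2 := by ring
      have e3 : 2*k+3 = (2*k+1)+2 := by ring
      have e1 : 2*(k+1)+1 = 2*k+3 := by ring
      have h3 : Delta (2*k+3) = X * Delta (2*k+2) - Delta (2*k+1) := by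
        rw [e3, Delta_add_two]
      rw [e1] at h1
      rw [D2_add_two, e5, Delta_add_two, e4, Delta_add_two]
      linear_combination (X^2-2) * h1 - h0 - h3

lemma I2 (k : ℕ) : D2 (k+1) + D2 k = Delta (2*k+2) := by
  apply mul_left_cancel₀ (X_ne_zero (R := ℤ))
  have h1 := I1 (k+1)
  have h0 := I1 k
  have e1 : 2*(k+1)+1 = (2*k+1)+2 := by ring
  rw [e1, Delta_add_two] at h1
  have e2 : 2*k+2 = 2*k+1+1 := by ring
  rw [e2]
  linear_combination h1 + h0

section Quot
variable (n : ℕ) (hn : 3 ≤ n)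

local notation "q" => Ideal.Quotient.mk (Ideal.span {Delta (n-1)})

lemma q_Delta_top : q (Delta (n-1)) = 0 := by
  rw [Ideal.Quotient.eq_zero_iff_mem]
  exact Ideal.subset_span rfl

include hn in
lemma F1 : ∀ j, ∀ i, i + j = n - 1 → q (Delta ((n-1) + j)) = - q (Delta i)
  | 0, i, h => by
      have : i = n - 1 := by omega
      subst this
      simp [q_Delta_top]
  | 1, i, h => by
      have hi : i = n - 2 := by omega
      subst hi
      have e : n - 1 + 1 = (n-2) + 2 := by omega
      rw [e, Delta_add_two, map_sub, map_mul]
      have e2 : n - 2 + 1 = n - 1 := by omega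
      rw [e2, q_Delta_top, mul_zero, zero_sub]
  | (j+2), i, h => by
      have h1 := F1 (j+1) (i+1) (by omega)
      have h0 := F1 j (i+2) (by omega)
      have e : n - 1 + (j+2) = (n - 1 + j) + 2 := by omega
      have e1 : n - 1 + j + 1 = n - 1 + (j + 1) := by omega
      rw [e, Delta_add_two, map_sub, map_mul, e1, h1, h0, Delta_add_two, map_sub, map_mul]
      ring

include hn in
lemma F2 : ∀ k, ∀ i, i + k = n - 2 → q (Delta (n-2) * Delta k) = q (Delta i)
  | 0, i, h => by
      have : i = n - 2 := by omega
      subst this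
      simp [Delta_zero]
  | 1, i, h => by
      have hi : i = n - 3 := by omega
      subst hi
      have hmem : X * Delta (n-2) - Delta (n-3) ∈ Ideal.span {Delta (n-1)} := by
        have e : n - 1 = (n-3) + 2 := by omega
        rw [e, Delta_add_two]
        have e2 : n - 3 + 1 = n - 2 := by omega
        rw [e2]
        exact Ideal.subset_span rfl
      have hz : q (X * Delta (n-2) - Delta (n-3)) = 0 :=
        (Ideal.Quotient.eq_zero_iff_mem).mpr hmem
      rw [map_sub, map_mul, sub_eq_zero] at hz
      rw [Delta_one, mul_comm, map_mul]
      exact hz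
  | (k+2), i, h => by
      have h1 := F2 (k+1) (i+1) (by omega)
      have h0 := F2 k (i+2) (by omega)
      have hrec : q (Delta (i+2)) = q X * q (Delta (i+1)) - q (Delta i) := by
        rw [Delta_add_two, map_sub, map_mul]
      rw [Delta_add_two, mul_sub, mul_left_comm, map_sub, map_mul, h1, h0, hrec]
      ring

include hn in
lemma aXu : q (Delta (n-3)) = q X * q (Delta (n-2)) := by
  have hmem : X * Delta (n-2) - Delta (n-3) ∈ Ideal.span {Delta (n-1)} := by
    have e : n - 1 = (n-3) + 2 := by omega
    rw [e, Delta_add_two]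
    have e2 : n - 3 + 1 = n - 2 := by omega
    rw [e2]
    exact Ideal.subset_span rfl
  have hz := (Ideal.Quotient.eq_zero_iff_mem).mpr hmem
  rw [map_sub, map_mul, sub_eq_zero] at hz
  exact hz.symm

include hn in
lemma u_sq : q (Delta (n-2)) * q (Delta (n-2)) = 1 := by
  have := F2 n hn (n-2) 0 (by omega)
  rw [map_mul] at this
  rw [this, Delta_zero, map_one]

include hn in
lemma a_sq : q (Delta (n-3)) * q (Delta (n-3)) = q X * q X := by
  rw [aXu n hn]
  have := u_sq n hn
  linear_combination (q X * q X) * this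

include hn in
lemma q_Delta_2n2 : q (Delta ((n-1) + (n-1))) = -1 := by
  rw [F1 n hn (n-1) 0 (by omega), Delta_zero, map_one]

include hn in
lemma q_Delta_2n1 : q (Delta ((n-1) + n)) = 0 := by
  have e : (n-1) + n = ((n-1) + (n-2)) + 2 := by omega
  rw [e, Delta_add_two, map_sub, map_mul]
  have e1 : (n-1) + (n-2) + 1 = (n-1) + (n-1) := by omega
  rw [e1, q_Delta_2n2 n hn, F1 n hn (n-2) 1 (by omega), Delta_one]
  ring

include hn in
lemma q_D2_sum : q (D2 (n-2+1)) + q (D2 (n-2)) = -1 := by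
  have := I2 (n-2)
  have e : 2*(n-2)+2 = (n-1) + (n-1) := by omega
  rw [e] at this
  calc q (D2 (n-2+1)) + q (D2 (n-2)) = q (D2 (n-2+1) + D2 (n-2)) := (map_add _ _ _).symm
    _ = q (Delta ((n-1)+(n-1))) := by rw [this]
    _ = -1 := q_Delta_2n2 n hn

include hn in
lemma q_aD : q (Delta (n-3)) * q (D2 (n-2+1)) = 0 := by
  rw [aXu n hn]
  have h1 := I1 (n-2+1)
  have e : 2*(n-2+1)+1 = (n-1) + n := by omega
  rw [e] at h1
  calc q X * q (Delta (n-2)) * q (D2 (n-2+1))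
      = q (Delta (n-2)) * q (X * D2 (n-2+1)) := by rw [map_mul]; ring
    _ = q (Delta (n-2)) * q (Delta ((n-1) + n)) := by rw [h1]
    _ = 0 := by rw [q_Delta_2n1 n hn, mul_zero]

end Quot

section MatrixPart
variable (n : ℕ) (hn : 3 ≤ n)

local notation "q" => Ideal.Quotient.mk (Ideal.span {Delta (n-1)})

noncomputable def A : Rn n := piK n (n-3)

noncomputable def M : Matrix (Fin 2) (Fin 2) (Rn n) := !![A n * A n - 1, -(A n); A n, -1]

lemma hM2 : M n * M n = (A n * A n - 2) • M n - 1 := by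
  rw [M, Matrix.mul_fin_two, Matrix.one_fin_two]
  ext i j
  fin_cases i <;> fin_cases j <;> simp <;> ring

include hn in
lemma q_X2 : q (X^2 - 2) = A n * A n - 2 := by
  rw [show A n = q (Delta (n-3)) from rfl, map_sub, map_pow]
  have h2 : q (2 : Polynomial ℤ) = (2 : Rn n) := map_ofNat _ 2
  rw [h2]
  linear_combination - a_sq n hn

include hn in
lemma Mpow : ∀ k, M n ^ (k+2) = q (D2 (k+1)) • M n - q (D2 k) • 1
  | 0 => by
      rw [pow_two, hM2 n, D2_one, D2_zero, map_one, one_smul, q_X2 n hn]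
  | (k+1) => by
      have IH := Mpow k
      have hq2 := q_X2 n hn
      have hrec : q (D2 (k+2)) = (A n * A n - 2) * q (D2 (k+1)) - q (D2 k) := by
        rw [D2_add_two, map_sub, map_mul, hq2]
      have : M n ^ (k+1+2) = (q (D2 (k+1)) • M n - q (D2 k) • 1) * M n := by
        rw [← IH, ← pow_succ]
      rw [this, sub_mul, Matrix.smul_mul (R := Rn n), Matrix.smul_mul (R := Rn n), one_mul, hM2 n, hrec]
      module

include hn in
lemma Mn_eq_one : M n ^ n = 1 := by
  have e : n = (n-2) + 2 := by omega
  have hp := Mpow n hn (n-2)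
  rw [← e] at hp
  have hsum := q_D2_sum n hn
  have haD := q_aD n hn
  have hd0 : q (D2 (n-2)) = -1 - q (D2 (n-2+1)) := by linear_combination hsum
  rw [hp, hd0]
  set d := q (D2 (n-2+1)) with hdd
  have hAd : A n * d = 0 := haD
  rw [M, Matrix.one_fin_two]
  ext i j
  fin_cases i <;> fin_cases j <;>
    simp <;>
    first
      | ring1
      | linear_combination (A n) * hAd
      | linear_combination hAd
      | linear_combination -hAd

include hn in
lemma Delta_n1_not_dvd {p : Polynomial ℤ} (hp : p ≠ 0) (hdeg : p.natDegree < n - 1) :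
    ¬ (Delta (n-1) ∣ p) := by
  intro hdvd
  have := natDegree_le_of_dvd hdvd hp
  rw [(Delta_monic (n-1)).2] at this
  omega

include hn in
lemma M_pow_ne_one {m : ℕ} (hm : 1 ≤ m) (hmn : 2 * m ≤ n) : M n ^ m ≠ 1 := by
  intro hone
  match m, hm with
  | 1, _ =>
    rw [pow_one, M, Matrix.one_fin_two] at hone
    have h01 := congrFun (congrFun hone 0) 1
    simp at h01
    -- h01 : A n = 0  (or -(A n) = 0)
    have hAz : q (Delta (n-3)) = 0 := by
      have : A n = 0 := by simpa using h01
      exact this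
    rw [Ideal.Quotient.eq_zero_iff_mem, Ideal.mem_span_singleton] at hAz
    exact Delta_n1_not_dvd n hn (Delta_monic (n-3)).1.ne_zero
      (by rw [(Delta_monic (n-3)).2]; omega) hAz
  | (j+2), _ =>
    have hp := Mpow n hn j
    rw [hone] at hp
    have h11 := congrFun (congrFun hp.symm 1) 1
    rw [M] at h11
    simp [Matrix.one_fin_two] at h11
    -- h11 : -q (D2 (j+1)) - q (D2 j) = 1  (in some form)
    have hsum : q (D2 (j+1) + D2 j) = -1 := by
      rw [map_add]; linear_combination -h11
    rw [I2 j] at hsum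
    have hdvd : Delta (n-1) ∣ Delta (2*j+2) + 1 := by
      rw [← Ideal.mem_span_singleton, ← Ideal.Quotient.eq_zero_iff_mem, map_add, map_one, hsum]
      ring
    have hne : Delta (2*j+2) + 1 ≠ 0 := by
      intro h0
      have : Delta (2*j+2) = -1 := by linear_combination h0
      have hd := (Delta_monic (2*j+2)).2
      rw [this] at hd
      simp at hd
    have hdeg : (Delta (2*j+2) + 1).natDegree < n - 1 := by
      have h1 : (Delta (2*j+2) + 1).natDegree ≤ max (Delta (2*j+2)).natDegree (1 : Polynomial ℤ).natDegree :=
        natDegree_add_le _ _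
      rw [(Delta_monic (2*j+2)).2, natDegree_one] at h1
      omega
    exact Delta_n1_not_dvd n hn hne hdeg hdvd

include hn in
lemma orderOf_M : orderOf (M n) = n := by
  have h1 := Mn_eq_one n hn
  have hdvd : orderOf (M n) ∣ n := orderOf_dvd_of_pow_eq_one h1
  by_contra hne
  obtain ⟨c, hc⟩ := hdvd
  have hm0 : orderOf (M n) ≠ 0 := by
    intro h0; rw [h0] at hc; omega
  have hcn : orderOf (M n) ≠ n := hne
  have hle : orderOf (M n) ≤ n := Nat.le_of_dvd (by omega) ⟨c, hc⟩
  have hc2 : 2 ≤ c := by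
    rcases Nat.lt_or_ge c 2 with h | h
    · interval_cases c <;> omega
    · exact h
  have h2m : 2 * orderOf (M n) ≤ n := by
    set o := orderOf (M n) with ho
    rw [hc]
    nlinarith
  exact M_pow_ne_one n hn (by omega) h2m (pow_orderOf_eq_one (M n))

end MatrixPart

end DihedralAux

open DihedralAux in
/-- For the `I₂(n)` Coxeter graph over the fusion ring `R = K₀(TLJₙ)`, the two
simple reflections `σᵢ(v) = v - B(eᵢ, v) eᵢ` (where `B(eᵢ,eᵢ) = 2` and
`B(e₁,e₂) = -π_{n-3}`) are involutions whose product has order exactly `n`. -/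
theorem dihedral_order_of_coxeter_product (n : ℕ) (hn : 3 ≤ n) :
    ∃ σ₁ σ₂ : Module.End (Rn n) (Fin 2 → Rn n),
      (∀ v : Fin 2 → Rn n,
        σ₁ v = v - (2 * v 0 - piK n (n-3) * v 1) • (Pi.single 0 1 : Fin 2 → Rn n)) ∧
      (∀ v : Fin 2 → Rn n,
        σ₂ v = v - (2 * v 1 - piK n (n-3) * v 0) • (Pi.single 1 1 : Fin 2 → Rn n)) ∧
      σ₁ * σ₁ = 1 ∧ σ₂ * σ₂ = 1 ∧ orderOf (σ₁ * σ₂) = n := by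
  classical
  set a : Rn n := piK n (n-3) with ha
  set S1 : Matrix (Fin 2) (Fin 2) (Rn n) := !![-1, a; 0, 1] with hS1
  set S2 : Matrix (Fin 2) (Fin 2) (Rn n) := !![1, 0; a, -1] with hS2
  let e := Matrix.toLinAlgEquiv' (R := Rn n) (n := Fin 2)
  refine ⟨e S1, e S2, ?_, ?_, ?_, ?_, ?_⟩
  · intro v
    funext x
    fin_cases x <;>
      simp [e, Matrix.toLinAlgEquiv'_apply, Matrix.mulVec, dotProduct,
        Fin.sum_univ_two, hS1] <;> ring
  · intro v
    funext x
    fin_cases x <;>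
      simp [e, Matrix.toLinAlgEquiv'_apply, Matrix.mulVec, dotProduct,
        Fin.sum_univ_two, hS2] <;> ring
  · have h : S1 * S1 = 1 := by
      rw [hS1, Matrix.mul_fin_two, Matrix.one_fin_two]
      ext i j; fin_cases i <;> fin_cases j <;> simp <;> ring
    rw [← map_mul, h, map_one]
  · have h : S2 * S2 = 1 := by
      rw [hS2, Matrix.mul_fin_two, Matrix.one_fin_two]
      ext i j; fin_cases i <;> fin_cases j <;> simp <;> ring
    rw [← map_mul, h, map_one]
  · have hprod : S1 * S2 = M n := by
      rw [hS1, hS2, Matrix.mul_fin_two, M]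
      ext i j; fin_cases i <;> fin_cases j <;> simp [A, ha] <;> ring
    rw [← map_mul, hprod]
    have hinj : Function.Injective e := e.injective
    have ho : orderOf (e (M n)) = orderOf (M n) :=
      orderOf_injective e.toAlgHom.toRingHom.toMonoidHom hinj (M n)
    rw [ho]
    exact orderOf_M n hn
end
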